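/- arXiv:1811.10715 — 4 statements merged into one kernel-verified Lean document; each statement's English description precedes it below -/
import Mathlib

section
/- Let U ⊆ ℂ be an open set and γ : [0,1] → ℂ a continuously differentiable curve whose image is contained in U. Then there exists a constant M ≥ 0 such that for every function f : ℂ → ℂ holomorphic on U with ∫_U |f|² dA < ∞, one has |∫_0^1 f(γ(t))·γ'(t) dt| ≤ M · (∫_U |f|² dA)^{1/2}. -/
/-!
For `f` holomorphic on a closed disc of radius `R` about `c`, the area mean value property applied
to `f ^ 2` gives `π R² ‖f c‖² ≤ ∫_{B(c,R)} ‖f‖² ≤ ∫_U ‖f‖²`. The trace of `γ` is compact, so one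
radius `R` works at every point of the curve, and `‖γ'‖` is bounded on `[0,1]`; integrating the
resulting pointwise bound on `f (γ t) * γ' t` gives the estimate. The area mean value property is
the circle mean value property integrated in polar coordinates.
-/

open MeasureTheory Metric Complex Real

section

variable {E : Type*} [NormedAddCommGroup E] [NormedSpace ℝ E]

theorem circleMap_mem_ball_iff {c : ℂ} {R s θ : ℝ} : circleMap c s θ ∈ ball c R ↔ |s| < R := by
  rw [mem_ball, Complex.dist_eq, circleMap_sub_center, norm_circleMap_zero]

theorem setIntegral_Ioo_circleMap_eq_smul_circleAverage (g : ℂ → E) (c : ℂ) (s : ℝ) :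
    ∫ θ in Set.Ioo (-π) π, g (circleMap c s θ) = (2 * π) • circleAverage g c s := by
  rw [circleAverage_eq_integral_add (-π), smul_inv_smul₀ (by positivity),
    intervalIntegral.integral_comp_add_right (fun θ ↦ g (circleMap c s θ)),
    intervalIntegral.integral_of_le (by linarith [pi_pos]), integral_Ioc_eq_integral_Ioo]
  ring_nf

theorem circleMap_eq_add_polarCoord_symm (c : ℂ) (p : ℝ × ℝ) :
    circleMap c p.1 p.2 = c + Complex.polarCoord.symm p := by
  rw [Complex.polarCoord_symm_apply, circleMap, Complex.exp_mul_I]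
  push_cast
  ring

theorem setIntegral_ball_eq_integral_smul_circleAverage {g : ℂ → E} {c : ℂ} {R : ℝ}
    (hg : ContinuousOn g (closedBall c R)) :
    ∫ z in ball c R, g z = ∫ s in Set.Ioo 0 R, (2 * π * s) • circleAverage g c s := by
  set A := Set.Ioo (0 : ℝ) R ×ˢ Set.Ioo (-π) π
  have h_polar : ∫ z in ball c R, g z = ∫ p in A, p.1 • g (circleMap c p.1 p.2) := by
    have hA : A ⊆ polarCoord.target := by
      rw [polarCoord_target]
      exact Set.prod_mono Set.Ioo_subset_Ioi_self le_rfl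
    rw [← integral_indicator measurableSet_ball, ← integral_add_left_eq_self _ c,
      ← Complex.integral_comp_polarCoord_symm, ← Set.inter_eq_self_of_subset_right hA,
      ← setIntegral_indicator (measurableSet_Ioo.prod measurableSet_Ioo)]
    refine setIntegral_congr_fun polarCoord.open_target.measurableSet fun p hp ↦ ?_
    rw [polarCoord_target] at hp
    classical
    simp only [← circleMap_eq_add_polarCoord_symm, Set.indicator_apply, circleMap_mem_ball_iff,
      abs_of_pos hp.1.out, Set.mem_prod, Set.mem_Ioo, hp.1.out, hp.2, true_and, and_true]
    split_ifs <;> simp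
  have h_int : IntegrableOn (fun p : ℝ × ℝ ↦ p.1 • g (circleMap c p.1 p.2)) A := by
    refine ContinuousOn.integrableOn_compact (isCompact_Icc.prod isCompact_Icc) ?_ |>.mono_set
      (Set.prod_mono Set.Ioo_subset_Icc_self Set.Ioo_subset_Icc_self)
    refine continuousOn_fst.smul (hg.comp (by fun_prop) fun p hp ↦ ?_)
    rw [mem_closedBall, Complex.dist_eq, circleMap_sub_center, norm_circleMap_zero,
      abs_of_nonneg hp.1.1]
    exact hp.1.2
  rw [h_polar, Measure.volume_eq_prod, setIntegral_prod _ (by rwa [← Measure.volume_eq_prod])]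
  refine setIntegral_congr_fun measurableSet_Ioo fun s _ ↦ ?_
  dsimp only
  rw [integral_smul, setIntegral_Ioo_circleMap_eq_smul_circleAverage, smul_smul, mul_comm s]

end

theorem DifferentiableOn.setIntegral_ball_eq_smul {E : Type*} [NormedAddCommGroup E]
    [NormedSpace ℂ E] [CompleteSpace E] {f : ℂ → E} {c : ℂ} {R : ℝ} (hR : 0 ≤ R)
    (hf : DifferentiableOn ℂ f (closedBall c R)) :
    ∫ z in ball c R, f z = (π * R ^ 2) • f c := by
  rw [setIntegral_ball_eq_integral_smul_circleAverage hf.continuousOn]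
  have h_mean : ∀ s ∈ Set.Ioo 0 R, circleAverage f c s = f c := fun s hs ↦
    ((hf.mono (closedBall_subset_closedBall (by rw [abs_of_pos hs.1]; exact hs.2.le))).mono
      closure_ball_subset_closedBall).diffContOnCl.circleAverage
  rw [setIntegral_congr_fun measurableSet_Ioo fun s hs ↦ by rw [h_mean s hs], integral_smul_const,
    ← integral_Ioc_eq_integral_Ioo, ← intervalIntegral.integral_of_le hR,
    intervalIntegral.integral_const_mul, integral_id]
  ring_nf

theorem DifferentiableOn.mul_norm_sq_le_setIntegral_ball {f : ℂ → ℂ} {c : ℂ} {R : ℝ}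
    (hR : 0 ≤ R) (hf : DifferentiableOn ℂ f (closedBall c R)) :
    π * R ^ 2 * ‖f c‖ ^ 2 ≤ ∫ z in ball c R, ‖f z‖ ^ 2 := by
  have h_mean := (hf.fun_pow 2).setIntegral_ball_eq_smul hR
  calc π * R ^ 2 * ‖f c‖ ^ 2 = ‖∫ z in ball c R, f z ^ 2‖ := by
        rw [h_mean, norm_smul, norm_pow, Real.norm_of_nonneg (by positivity)]
    _ ≤ ∫ z in ball c R, ‖f z‖ ^ 2 :=
        (norm_integral_le_integral_norm _).trans_eq (by simp only [norm_pow])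

theorem DifferentiableOn.norm_le_of_closedBall_subset {U : Set ℂ} {f : ℂ → ℂ}
    (hf : DifferentiableOn ℂ f U) (hf2 : IntegrableOn (fun z ↦ ‖f z‖ ^ 2) U)
    {c : ℂ} {R : ℝ} (hR : 0 < R) (hcR : closedBall c R ⊆ U) :
    ‖f c‖ ≤ (√(π * R ^ 2))⁻¹ * √(∫ z in U, ‖f z‖ ^ 2) := by
  have h_ball : π * R ^ 2 * ‖f c‖ ^ 2 ≤ ∫ z in U, ‖f z‖ ^ 2 :=
    ((hf.mono hcR).mul_norm_sq_le_setIntegral_ball hR.le).trans <|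
      setIntegral_mono_set hf2 (.of_forall fun _ ↦ by positivity)
        (ball_subset_closedBall.trans hcR).eventuallyLE
  rw [le_inv_mul_iff₀ (by positivity), ← Real.sqrt_sq (norm_nonneg (f c)), ← Real.sqrt_mul']
  · exact Real.sqrt_le_sqrt h_ball
  · positivity

theorem IsCompact.exists_norm_le_mul_sqrt_integral_norm_sq {K U : Set ℂ} (hK : IsCompact K)
    (hU : IsOpen U) (hKU : K ⊆ U) :
    ∃ M, 0 ≤ M ∧ ∀ f : ℂ → ℂ, DifferentiableOn ℂ f U → IntegrableOn (fun z ↦ ‖f z‖ ^ 2) U →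
      ∀ z ∈ K, ‖f z‖ ≤ M * √(∫ w in U, ‖f w‖ ^ 2) := by
  obtain ⟨R, hR, hRU⟩ := hK.exists_cthickening_subset_open hU hKU
  exact ⟨(√(π * R ^ 2))⁻¹, by positivity, fun f hf hf2 z hz ↦
    hf.norm_le_of_closedBall_subset hf2 hR ((closedBall_subset_cthickening hz R).trans hRU)⟩

/-- Integration of a holomorphic one-form `f(z) dz` along a fixed continuously differentiable
curve `γ : [0,1] → U` is a bounded linear functional on the Bergman space of `U` (used in the
proofs of Theorems 4.3 and 4.8). -/
theorem stmt_2 (U : Set ℂ) (hU : IsOpen U) (γ : ℝ → ℂ) (hγ : ContDiff ℝ 1 γ)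
    (hγU : ∀ t ∈ Set.Icc (0:ℝ) 1, γ t ∈ U) :
    ∃ M : ℝ, 0 ≤ M ∧ ∀ f : ℂ → ℂ,
      DifferentiableOn ℂ f U →
      IntegrableOn (fun z => ‖f z‖ ^ 2) U volume →
      ‖∫ t in (0:ℝ)..1, f (γ t) * deriv γ t‖
        ≤ M * Real.sqrt (∫ w in U, ‖f w‖ ^ 2) := by
  obtain ⟨M, hM, h_eval⟩ :=
    (isCompact_Icc.image hγ.continuous).exists_norm_le_mul_sqrt_integral_norm_sq hU
      (Set.image_subset_iff.2 hγU)
  obtain ⟨C, hC⟩ := isCompact_Icc.exists_bound_of_continuousOn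
    (hγ.continuous_deriv le_rfl).continuousOn
  have hC0 : 0 ≤ C := (norm_nonneg _).trans (hC 0 (Set.left_mem_Icc.2 zero_le_one))
  refine ⟨M * C, by positivity, fun f hf hf2 ↦ ?_⟩
  have h_bound : ∀ t ∈ Set.uIoc (0:ℝ) 1,
      ‖f (γ t) * deriv γ t‖ ≤ M * C * √(∫ w in U, ‖f w‖ ^ 2) := by
    intro t ht
    rw [Set.uIoc_of_le zero_le_one] at ht
    have ht' := Set.Ioc_subset_Icc_self ht
    rw [norm_mul, mul_right_comm]
    exact mul_le_mul (h_eval f hf hf2 _ ⟨t, ht', rfl⟩) (hC t ht') (norm_nonneg _) (by positivity)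
  simpa using intervalIntegral.norm_integral_le_of_norm_le_const h_bound
end

section
/- Let m : ℝ² → ℂ be given by m(ξ₁,ξ₂) = (ξ₁ − iξ₂)/(ξ₁ + iξ₂) for (ξ₁,ξ₂) ≠ (0,0) (and m(0,0) = 0), and let 𝓕 denote the Plancherel (L²) Fourier transform on L²(ℝ²; ℂ) ≅ L²(ℂ; ℂ). Suppose B : L²(ℂ;ℂ) → L²(ℂ;ℂ) is a linear map such that for every u ∈ L²(ℂ;ℂ), 𝓕(Bu) = m · 𝓕(u) almost everywhere. Then for all u, v ∈ L²(ℂ;ℂ), ∫_ℂ (Bu)(z)·v(z) dA(z) = ∫_ℂ (Bv)(z)·u(z) dA(z). -/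
/-!
Writing `∫ f g = ⟪f̄, g⟫` and using that `𝓕₂` is unitary and sends `f̄` to the conjugate of the
reflection `ξ ↦ 𝓕₂ f (-ξ)`, one gets the bilinear Parseval identity
`∫ f g = ∫ 𝓕₂ f (-ξ) · 𝓕₂ g (ξ) dξ`. The conjugation rule is an elementary computation for
integrable `f`, where `𝓕₂` is the Fourier integral, and extends to `L²` by density.
For `f = Bu` the right-hand side becomes `∫ m(ξ) 𝓕₂ u (-ξ) 𝓕₂ v (ξ) dξ`, and since the symbol
`m` is even, the substitution `ξ ↦ -ξ` exchanges the roles of `u` and `v`.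
-/

open MeasureTheory Complex FourierTransform ComplexConjugate

section Involutions

variable {α : Type*} [MeasurableSpace α] {μ : Measure α}

noncomputable def conjL2 : Lp ℂ 2 μ →L[ℝ] Lp ℂ 2 μ :=
  (conjCLE : ℂ →L[ℝ] ℂ).compLpL 2 μ

lemma coeFn_conjL2 (f : Lp ℂ 2 μ) : conjL2 f =ᵐ[μ] fun x => conj (f x) :=
  ContinuousLinearMap.coeFn_compLpL _ f

lemma integral_mul_eq_inner_conjL2 (f g : Lp ℂ 2 μ) :
    ∫ x, f x * g x ∂μ = inner ℂ (conjL2 f) g := by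
  rw [L2.inner_def]
  refine integral_congr_ae ?_
  filter_upwards [coeFn_conjL2 f] with x hx
  simp [hx, mul_comm]

variable {G : Type*} [MeasurableSpace G] [AddGroup G] [MeasurableNeg G] {ν : Measure G}
  [ν.IsNegInvariant]

noncomputable def reflectL2 : Lp ℂ 2 ν →L[ℂ] Lp ℂ 2 ν :=
  (Lp.compMeasurePreservingₗᵢ ℂ _ (Measure.measurePreserving_neg ν)).toContinuousLinearMap

lemma coeFn_reflectL2 (f : Lp ℂ 2 ν) : reflectL2 f =ᵐ[ν] fun x => f (-x) :=
  Lp.coeFn_compMeasurePreserving f _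

end Involutions

variable {V : Type*} [NormedAddCommGroup V] [InnerProductSpace ℝ V] [MeasurableSpace V]
  [BorelSpace V] [FiniteDimensional ℝ V]

open scoped RealInnerProductSpace in
lemma Real.fourier_conj (f : V → ℂ) (w : V) :
    𝓕 (fun x => conj (f x)) w = conj (𝓕 f (-w)) := by
  simp only [Real.fourier_eq, ← integral_conj, Circle.smul_def, smul_eq_mul, map_mul,
    inner_neg_right, neg_neg, ← Circle.coe_inv_eq_conj, ← AddChar.map_neg_eq_inv]

section Plancherel

variable (𝓕₂ : Lp ℂ 2 (volume : Measure V) ≃ₗᵢ[ℂ] Lp ℂ 2 (volume : Measure V))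
  (h𝓕 : ∀ u : Lp ℂ 2 (volume : Measure V), Integrable (u : V → ℂ) volume →
    (𝓕₂ u : V → ℂ) =ᵐ[volume] 𝓕 (u : V → ℂ))
include h𝓕

lemma fourierL2_conjL2_of_integrable (f : Lp ℂ 2 (volume : Measure V))
    (hf : Integrable (f : V → ℂ) volume) :
    𝓕₂ (conjL2 f) = conjL2 (reflectL2 (𝓕₂ f)) := by
  have hconj : Integrable (conjL2 f : V → ℂ) volume :=
    ((conjCLE : ℂ →L[ℝ] ℂ).integrable_comp hf).congr (coeFn_conjL2 f).symm
  have hreflect : (fun w => 𝓕 (f : V → ℂ) (-w)) =ᵐ[volume] fun w => 𝓕₂ f (-w) :=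
    (Measure.measurePreserving_neg volume).quasiMeasurePreserving.ae_eq_comp (h𝓕 f hf).symm
  apply Lp.ext
  calc (𝓕₂ (conjL2 f) : V → ℂ)
      =ᵐ[volume] 𝓕 (conjL2 f : V → ℂ) := h𝓕 _ hconj
    _ = fun w => conj (𝓕 (f : V → ℂ) (-w)) := by
        ext w
        rw [Real.fourier_congr_ae (coeFn_conjL2 f), Real.fourier_conj]
    _ =ᵐ[volume] fun w => conj (𝓕₂ f (-w)) := hreflect.fun_comp conj
    _ =ᵐ[volume] conjL2 (reflectL2 (𝓕₂ f)) := by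
        filter_upwards [coeFn_conjL2 (reflectL2 (𝓕₂ f)), coeFn_reflectL2 (𝓕₂ f)] with w h₁ h₂
        rw [h₁, h₂]

lemma fourierL2_conjL2 (f : Lp ℂ 2 (volume : Measure V)) :
    𝓕₂ (conjL2 f) = conjL2 (reflectL2 (𝓕₂ f)) := by
  induction f using Lp.induction (by norm_num : (2 : ENNReal) ≠ ⊤) with
  | indicatorConst c hs hμs =>
    exact fourierL2_conjL2_of_integrable 𝓕₂ h𝓕 _ (integrable_indicatorConstLp hs hμs.ne c)
  | add _ _ _ hf hg => simp only [map_add, hf, hg]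
  | isClosed =>
    exact isClosed_eq (𝓕₂.continuous.comp conjL2.continuous)
      (conjL2.continuous.comp (reflectL2.continuous.comp 𝓕₂.continuous))

lemma integral_mul_eq_integral_fourierL2_neg_mul (f g : Lp ℂ 2 (volume : Measure V)) :
    ∫ x, f x * g x = ∫ ξ, 𝓕₂ f (-ξ) * 𝓕₂ g ξ := by
  rw [integral_mul_eq_inner_conjL2, ← 𝓕₂.inner_map_map, fourierL2_conjL2 𝓕₂ h𝓕,
    ← integral_mul_eq_inner_conjL2]
  refine integral_congr_ae ?_
  filter_upwards [coeFn_reflectL2 (𝓕₂ f)] with ξ hξ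
  rw [hξ]

lemma integral_mul_comm_of_even_fourierMultiplier (m : V → ℂ) (hm : m.Even)
    (B : Lp ℂ 2 (volume : Measure V) →ₗ[ℂ] Lp ℂ 2 (volume : Measure V))
    (hB : ∀ u, (𝓕₂ (B u) : V → ℂ) =ᵐ[volume] fun ξ => m ξ * 𝓕₂ u ξ)
    (u v : Lp ℂ 2 (volume : Measure V)) :
    ∫ x, B u x * v x = ∫ x, B v x * u x := by
  have key : ∀ u v : Lp ℂ 2 (volume : Measure V),
      ∫ x, B u x * v x = ∫ ξ, m ξ * 𝓕₂ u (-ξ) * 𝓕₂ v ξ := by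
    intro u v
    rw [integral_mul_eq_integral_fourierL2_neg_mul 𝓕₂ h𝓕]
    refine integral_congr_ae ?_
    filter_upwards [(Measure.measurePreserving_neg volume).quasiMeasurePreserving.ae_eq_comp
      (hB u)] with ξ hξ
    simp only [Function.comp_apply] at hξ
    rw [hξ, hm]
  rw [key, key, ← integral_neg_eq_self]
  congr 1 with ξ
  rw [neg_neg, hm]
  ring

end Plancherel

lemma beurlingSymbol_even :
    Function.Even fun ξ : EuclideanSpace ℝ (Fin 2) =>
      ((ξ 0 : ℂ) - Complex.I * (ξ 1 : ℂ)) / ((ξ 0 : ℂ) + Complex.I * (ξ 1 : ℂ)) := by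
  intro ξ
  simp only [PiLp.neg_apply, ofReal_neg]
  rw [← neg_div_neg_eq]
  ring_nf

/-- Symmetry of the Beurling transform (the planar 'adjoint identity' of Theorem 3.5):
if `B` on `L²(ℝ²;ℂ) ≅ L²(ℂ;ℂ)` has Fourier multiplier symbol
`m(ξ₁,ξ₂) = (ξ₁ − iξ₂)/(ξ₁ + iξ₂)` with respect to the Plancherel transform `𝓕`, then
`∫ (Bu)·v dA = ∫ (Bv)·u dA` for all `u, v ∈ L²`. -/
theorem stmt_4
    (𝓕₂ : Lp ℂ 2 (volume : Measure (EuclideanSpace ℝ (Fin 2))) ≃ₗᵢ[ℂ]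
          Lp ℂ 2 (volume : Measure (EuclideanSpace ℝ (Fin 2))))
    (h𝓕 : ∀ u : Lp ℂ 2 (volume : Measure (EuclideanSpace ℝ (Fin 2))),
      Integrable (u : EuclideanSpace ℝ (Fin 2) → ℂ) volume →
      (𝓕₂ u : EuclideanSpace ℝ (Fin 2) → ℂ)
        =ᵐ[volume] 𝓕 (u : EuclideanSpace ℝ (Fin 2) → ℂ))
    (m : EuclideanSpace ℝ (Fin 2) → ℂ)
    (hm : ∀ ξ : EuclideanSpace ℝ (Fin 2),
      m ξ = ((ξ 0 : ℂ) - Complex.I * (ξ 1 : ℂ)) / ((ξ 0 : ℂ) + Complex.I * (ξ 1 : ℂ)))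
    (B : Lp ℂ 2 (volume : Measure (EuclideanSpace ℝ (Fin 2))) →ₗ[ℂ]
         Lp ℂ 2 (volume : Measure (EuclideanSpace ℝ (Fin 2))))
    (hB : ∀ u : Lp ℂ 2 (volume : Measure (EuclideanSpace ℝ (Fin 2))),
      (𝓕₂ (B u) : EuclideanSpace ℝ (Fin 2) → ℂ)
        =ᵐ[volume] fun ξ => m ξ * (𝓕₂ u : EuclideanSpace ℝ (Fin 2) → ℂ) ξ) :
    ∀ u v : Lp ℂ 2 (volume : Measure (EuclideanSpace ℝ (Fin 2))),
      ∫ z, (B u : EuclideanSpace ℝ (Fin 2) → ℂ) z * (v : EuclideanSpace ℝ (Fin 2) → ℂ) z ∂volume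
        = ∫ z, (B v : EuclideanSpace ℝ (Fin 2) → ℂ) z
            * (u : EuclideanSpace ℝ (Fin 2) → ℂ) z ∂volume := by
  obtain rfl : m = _ := funext hm
  exact integral_mul_comm_of_even_fourierMultiplier 𝓕₂ h𝓕 _ beurlingSymbol_even B hB
end

section
/- Let f and g be holomorphic on the open unit disk 𝔻 and set h = f + conj ∘ g. Then for every z with |z| > 1, the limit as r → 1⁻ of (1/(2πi)) ∮_{|w| = r} h(w) / (w − z) dw exists and equals conj(g(0)) − conj(g(1/conj(z))), where ∮_{|w|=r} denotes the integral over the circle of radius r centered at 0, traversed once counterclockwise. (Note 1/conj(z) ∈ 𝔻 since |z| > 1.) -/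
open MeasureTheory Metric Complex Filter
open Topology ComplexConjugate

/-!
On the circle `|w| = r` we have `conj w = r² / w`, so conjugating the integral of
`conj (g w) / (w - z)` turns `conj ∘ g` into `g` and `dw` into `-(r² / w²) dw`.  A partial
fraction decomposition then leaves two Cauchy integrals of `g`, at `0` and at the reflected
point `r² / conj z` inside the disc, while the holomorphic part `f (w) / (w - z)` integrates
to zero because `z` lies outside the disc.  As `r → 1⁻` the reflected point tends to
`1 / conj z`.
-/

theorem conj_eq_sq_norm_div (u : ℂ) : conj u = ((‖u‖ ^ 2 : ℝ) : ℂ) / u := by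
  rcases eq_or_ne u 0 with rfl | hu
  · simp
  · rw [eq_div_iff hu, mul_comm, mul_conj, normSq_eq_norm_sq]

theorem conj_circleIntegral (f : ℂ → ℂ) (c : ℂ) (R : ℝ) :
    conj (∮ w in C(c, R), f w)
      = -∮ w in C(c, R), (R ^ 2 / (w - c) ^ 2) * conj (f w) := by
  simp only [circleIntegral, ← intervalIntegral.intervalIntegral_conj,
    ← intervalIntegral.integral_neg]
  refine intervalIntegral.integral_congr fun θ _ => ?_
  simp only [deriv_circleMap, circleMap_sub_center, smul_eq_mul, map_mul, conj_I,
    conj_eq_sq_norm_div (circleMap 0 R θ), norm_circleMap_zero, sq_abs]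
  rcases eq_or_ne (circleMap 0 R θ) 0 with h | h
  · simp [h]
  · field_simp
    push_cast
    ring

theorem circleIntegrable_div_sub {φ : ℂ → ℂ} {c z : ℂ} {R : ℝ} (hR : 0 ≤ R)
    (hφ : ContinuousOn φ (sphere c R)) (hz : z ∉ sphere c R) :
    CircleIntegrable (fun w => φ w / (w - z)) c R :=
  (hφ.div (continuousOn_id.sub continuousOn_const) fun _ hw =>
    sub_ne_zero.mpr (ne_of_mem_of_not_mem hw hz)).circleIntegrable hR

theorem circleIntegral_div_sub_eq_zero {f : ℂ → ℂ} {c z : ℂ} {R : ℝ} (hR : 0 ≤ R)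
    (hf : DifferentiableOn ℂ f (closedBall c R)) (hz : z ∉ closedBall c R) :
    ∮ w in C(c, R), f w / (w - z) = 0 :=
  ((hf.div (differentiableOn_id.sub_const z) fun _ hw =>
    sub_ne_zero.mpr (ne_of_mem_of_not_mem hw hz)).mono
      closure_ball_subset_closedBall).diffContOnCl.circleIntegral_eq_zero hR

theorem sq_div_sq_mul_div_conj_sub {r : ℝ} (hr : 0 < r) {w z : ℂ} (hw : ‖w‖ = r)
    (hz : r < ‖z‖) (x : ℂ) :
    r ^ 2 / w ^ 2 * (x / (conj w - conj z)) = w⁻¹ * x - (w - r ^ 2 / conj z)⁻¹ * x := by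
  have hw0 : w ≠ 0 := by rw [← norm_pos_iff]; linarith
  have hz0 : conj z ≠ 0 := by rw [map_ne_zero, ← norm_pos_iff]; linarith
  have hden : w * conj z - r ^ 2 ≠ 0 := by
    rw [sub_ne_zero]
    intro h
    have := congrArg norm h
    rw [norm_mul, RCLike.norm_conj, hw, norm_pow, norm_real, Real.norm_of_nonneg hr.le] at this
    nlinarith
  have hden' : (r : ℂ) ^ 2 - w * conj z ≠ 0 := by
    rw [← neg_sub]; exact neg_ne_zero.mpr hden
  rw [conj_eq_sq_norm_div w, hw]
  push_cast
  field_simp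
  ring

theorem circleIntegral_conj_div_sub {g : ℂ → ℂ} {r : ℝ} {z : ℂ}
    (hg : DifferentiableOn ℂ g (closedBall 0 r)) (hr : 0 < r) (hz : r < ‖z‖) :
    ∮ w in C(0, r), conj (g w) / (w - z)
      = 2 * Real.pi * I * (conj (g 0) - conj (g (r ^ 2 / conj z))) := by
  set a := (r : ℂ) ^ 2 / conj z
  have ha : a ∈ ball (0 : ℂ) r := by
    rw [mem_ball_zero_iff, norm_div, RCLike.norm_conj, norm_pow, norm_real,
      Real.norm_of_nonneg hr.le, div_lt_iff₀ (by linarith)]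
    nlinarith
  have hsphere : Set.EqOn (fun w => (r ^ 2 / (w - 0) ^ 2) * conj (conj (g w) / (w - z)))
      (fun w => (w - 0)⁻¹ • g w - (w - a)⁻¹ • g w) (sphere 0 r) := fun w hw => by
    simp only [map_div₀, conj_conj, map_sub, sub_zero, smul_eq_mul]
    exact sq_div_sq_mul_div_conj_sub hr (mem_sphere_zero_iff_norm.mp hw) hz (g w)
  have hint : ∀ b ∈ ball (0 : ℂ) r, CircleIntegrable (fun w => (w - b)⁻¹ • g w) 0 r := by
    intro b hb
    refine ContinuousOn.circleIntegrable hr.le <|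
      ((continuousOn_id.sub continuousOn_const).inv₀ fun w hw => ?_).smul
        (hg.continuousOn.mono sphere_subset_closedBall)
    exact sub_ne_zero.mpr (sphere_disjoint_ball.ne_of_mem hw hb)
  apply (starRingEnd ℂ).injective
  rw [conj_circleIntegral, circleIntegral.integral_congr hr.le hsphere,
    circleIntegral.integral_sub (hint 0 (mem_ball_self hr)) (hint a ha),
    hg.circleIntegral_sub_inv_smul (mem_ball_self hr), hg.circleIntegral_sub_inv_smul ha]
  simp only [map_mul, map_sub, conj_conj, smul_eq_mul, conj_I, map_ofNat, conj_ofReal]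
  ring

theorem circleIntegral_add_conj_div_sub {f g : ℂ → ℂ} {r : ℝ} {z : ℂ}
    (hf : DifferentiableOn ℂ f (closedBall 0 r)) (hg : DifferentiableOn ℂ g (closedBall 0 r))
    (hr : 0 < r) (hz : r < ‖z‖) :
    (2 * Real.pi * I)⁻¹ * ∮ w in C(0, r), (f w + conj (g w)) / (w - z)
      = conj (g 0) - conj (g (r ^ 2 / conj z)) := by
  have hz' : z ∉ closedBall 0 r := by rw [mem_closedBall_zero_iff]; linarith
  have hz'' : z ∉ sphere 0 r := fun h => hz' (sphere_subset_closedBall h)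
  have hgc : ContinuousOn (fun w => conj (g w)) (sphere 0 r) :=
    continuous_conj.comp_continuousOn (hg.continuousOn.mono sphere_subset_closedBall)
  simp_rw [add_div]
  rw [circleIntegral.integral_add
      (circleIntegrable_div_sub hr.le (hf.continuousOn.mono sphere_subset_closedBall) hz'')
      (circleIntegrable_div_sub hr.le hgc hz''),
    circleIntegral_div_sub_eq_zero hr.le hf hz', zero_add, circleIntegral_conj_div_sub hg hr hz,
    inv_mul_cancel_left₀ two_pi_I_ne_zero]

/-- Restriction to `𝔻* = {|z|>1}` of the Cauchy-type jump integral for the unit circle: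
for `h = f + conj ∘ g` harmonic on `𝔻` and `|z| > 1`, the limit as `r → 1⁻` of
`(1/(2πi)) ∮_{|w|=r} h(w)/(w−z) dw` exists and equals `conj(g(0)) − conj(g(1/conj z))`. -/
theorem stmt_10 (f g : ℂ → ℂ) (hf : DifferentiableOn ℂ f (ball (0:ℂ) 1))
    (hg : DifferentiableOn ℂ g (ball (0:ℂ) 1))
    (h : ℂ → ℂ) (hh : ∀ w, h w = f w + (starRingEnd ℂ) (g w))
    (z : ℂ) (hz : 1 < ‖z‖) :
    Tendsto (fun r : ℝ => (2 * Real.pi * Complex.I)⁻¹ * (∮ w in C(0, r), h w / (w - z)))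
      (nhdsWithin 1 (Set.Iio 1))
      (nhds ((starRingEnd ℂ) (g 0) - (starRingEnd ℂ) (g (1 / (starRingEnd ℂ) z)))) := by
  have hreflect : 1 / (starRingEnd ℂ) z ∈ ball (0 : ℂ) 1 := by
    rw [mem_ball_zero_iff, norm_div, norm_one, RCLike.norm_conj, div_lt_one (by linarith)]
    exact hz
  have hpath : Tendsto (fun r : ℝ => (r : ℂ) ^ 2 / (starRingEnd ℂ) z) (𝓝[<] 1)
      (𝓝 (1 / (starRingEnd ℂ) z)) := by
    refine tendsto_nhdsWithin_of_tendsto_nhds ?_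
    simpa using ((continuous_ofReal.pow 2).div_const ((starRingEnd ℂ) z)).tendsto 1
  refine (tendsto_const_nhds.sub <| (Complex.continuous_conj.tendsto _).comp <|
    (hg.continuousOn.continuousAt (isOpen_ball.mem_nhds hreflect)).tendsto.comp hpath).congr' ?_
  filter_upwards [Ioo_mem_nhdsLT zero_lt_one] with r ⟨hr0, hr1⟩
  have hsub : closedBall (0 : ℂ) r ⊆ ball 0 1 := closedBall_subset_ball hr1
  simp only [hh]
  exact (circleIntegral_add_conj_div_sub (hf.mono hsub) (hg.mono hsub) hr0 (hr1.trans hz)).symm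
end

section
/- Let f be holomorphic on the open unit disk 𝔻 with ∫_𝔻 |f|² dA < ∞. If ∫_𝔻 conj(f(w)) / (w − z)² dA(w) = 0 for every z with |z| > 1, then f = 0 on 𝔻. -/
/-!
Integrating the hypothesis against `z ^ (n + 1)` over a circle `|z| = R > 1` and exchanging the
two integrals, Cauchy's formula for the derivative of `z ^ (n + 1)` shows that every moment
`∫_𝔻 conj (f w) * w ^ n dA` vanishes. In polar coordinates, Cauchy's formula for Taylor
coefficients gives `∫_𝔻 f w * conj w ^ n dA = π / (n + 1) * f⁽ⁿ⁾(0) / n!`, so every Taylor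
coefficient of `f` at `0` vanishes, and `f = 0` on `𝔻` by its Taylor expansion.
-/

open MeasureTheory Metric Complex Set
open scoped Real Nat ComplexConjugate

theorem circleIntegral_integral_swap {α E : Type*} [MeasurableSpace α] {μ : Measure α} [SFinite μ]
    [NormedAddCommGroup E] [NormedSpace ℂ E] {F : ℂ → α → E} {c : ℂ} {R : ℝ}
    (hF : Integrable (fun p : ℝ × α => F (circleMap c R p.1) p.2)
      ((volume.restrict (Ioc 0 (2 * π))).prod μ)) :
    (∮ z in C(c, R), ∫ a, F z a ∂μ) = ∫ a, ∮ z in C(c, R), F z a ∂μ := by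
  have hF' : Integrable
      (Function.uncurry fun θ a => deriv (circleMap c R) θ • F (circleMap c R θ) a)
      ((volume.restrict (Ioc 0 (2 * π))).prod μ) := by
    simp only [deriv_circleMap]
    refine hF.bdd_smul |R| ?_ (.of_forall fun p => by simp)
    exact (((continuous_circleMap 0 R).mul continuous_const).measurable.comp measurable_fst)
      |>.aestronglyMeasurable
  simp only [circleIntegral, intervalIntegral.integral_of_le Real.two_pi_pos.le, ← integral_smul]
  exact integral_integral_swap hF'

theorem circleIntegral_pow_succ_mul_div_sub_sq {w : ℂ} {R : ℝ} (hw : w ∈ ball (0 : ℂ) R)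
    (a : ℂ) (n : ℕ) :
    (∮ z in C(0, R), z ^ (n + 1) * (a / (w - z) ^ 2)) = 2 * π * I * (n + 1) * (a * w ^ n) := by
  have h := two_pi_I_inv_smul_circleIntegral_sub_sq_inv_smul_of_differentiable isOpen_univ
    (subset_univ _) (differentiable_pow (n + 1)).differentiableOn hw
  rw [smul_eq_mul, inv_mul_eq_iff_eq_mul₀ two_pi_I_ne_zero] at h
  simp only [smul_eq_mul, differentiableAt_fun_id, deriv_fun_pow, deriv_id'', mul_one,
    add_tsub_cancel_right, Nat.cast_add, Nat.cast_one] at h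
  calc (∮ z in C(0, R), z ^ (n + 1) * (a / (w - z) ^ 2))
      = a * ∮ z in C(0, R), ((z - w) ^ 2)⁻¹ * z ^ (n + 1) := by
        rw [← circleIntegral.integral_const_mul]
        congr 1
        ext z
        ring
    _ = 2 * π * I * (n + 1) * (a * w ^ n) := by
        rw [h]
        ring

theorem integral_mul_pow_eq_zero_of_integral_div_sub_sq_eq_zero {μ : Measure ℂ} [SFinite μ]
    {g : ℂ → ℂ} {r : ℝ} (hμ : ∀ᵐ w ∂μ, w ∈ ball (0 : ℂ) r) (hg : Integrable g μ)
    (hT : ∀ z : ℂ, r < ‖z‖ → ∫ w, g w / (w - z) ^ 2 ∂μ = 0) (n : ℕ) :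
    ∫ w, g w * w ^ n ∂μ = 0 := by
  set R := |r| + 1
  have hR : 0 < R := by positivity
  have hrR : r < R := by linarith [le_abs_self r]
  set F : ℂ → ℂ → ℂ := fun z w => z ^ (n + 1) * (g w / (w - z) ^ 2)
  have hF : Integrable (fun p : ℝ × ℂ => F (circleMap 0 R p.1) p.2)
      ((volume.restrict (Ioc 0 (2 * π))).prod μ) := by
    refine ((hg.norm.const_mul (R ^ (n + 1))).comp_snd _).mono' ?_ ?_
    · have hgm := hg.1.aemeasurable.comp_snd (μ := volume.restrict (Ioc 0 (2 * π)))
      have hcirc : Measurable fun p : ℝ × ℂ => circleMap 0 R p.1 :=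
        ((continuous_circleMap 0 R).comp continuous_fst).measurable
      simp only [F]
      exact AEMeasurable.aestronglyMeasurable (by fun_prop)
    · filter_upwards [Measure.quasiMeasurePreserving_snd.ae hμ] with p hp
      rw [mem_ball_zero_iff] at hp
      have hsep : 1 ≤ ‖p.2 - circleMap 0 R p.1‖ := by
        have := norm_sub_norm_le (circleMap 0 R p.1) p.2
        rw [norm_sub_rev, norm_circleMap_zero, abs_of_pos hR] at this
        linarith [le_abs_self r]
      simp only [F, norm_mul, norm_div, norm_pow, norm_circleMap_zero, abs_of_pos hR]
      gcongr
      exact div_le_self (norm_nonneg _) (one_le_pow₀ hsep)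
  have hzero : (∮ z in C(0, R), ∫ w, F z w ∂μ) = 0 := by
    rw [circleIntegral.integral_congr hR.le (g := fun _ => 0)]
    · simp [circleIntegral]
    intro z hz
    simp only [F, integral_const_mul]
    rw [hT z (by rwa [mem_sphere_zero_iff_norm.1 hz]), mul_zero]
  have hcauchy : ∀ᵐ w ∂μ, (∮ z in C(0, R), F z w) = 2 * π * I * (n + 1) * (g w * w ^ n) := by
    filter_upwards [hμ] with w hw
    exact circleIntegral_pow_succ_mul_div_sub_sq (ball_subset_ball hrR.le hw) _ n
  rw [circleIntegral_integral_swap hF, integral_congr_ae hcauchy, integral_const_mul] at hzero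
  refine (mul_eq_zero.1 hzero).resolve_left ?_
  exact mul_ne_zero two_pi_I_ne_zero (by exact_mod_cast n.succ_ne_zero)

theorem Complex.polarCoord_symm_eq_circleMap (p : ℝ × ℝ) :
    Complex.polarCoord.symm p = circleMap 0 p.1 p.2 := by
  simp [circleMap, Complex.exp_mul_I]

section Polar

variable {E : Type*} [NormedAddCommGroup E] [NormedSpace ℝ E] {g : ℂ → E} {R : ℝ}

theorem Ioo_prod_Ioo_subset_polarCoord_target : Ioo 0 R ×ˢ Ioo (-π) π ⊆ polarCoord.target :=
  prod_mono Ioo_subset_Ioi_self subset_rfl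

theorem smul_indicator_ball_polarCoord_symm {p : ℝ × ℝ} (hp : p ∈ polarCoord.target) :
    p.1 • (ball 0 R).indicator g (Complex.polarCoord.symm p)
      = (Ioo 0 R ×ˢ Ioo (-π) π).indicator (fun q => q.1 • g (circleMap 0 q.1 q.2)) p := by
  obtain ⟨r, θ⟩ := p
  obtain ⟨hr, hθ⟩ := hp
  rw [mem_Ioi] at hr
  have hmem : circleMap 0 r θ ∈ ball 0 R ↔ (r, θ) ∈ Ioo 0 R ×ˢ Ioo (-π) π := by
    simp [hr, hθ, abs_of_pos hr]
  rw [polarCoord_symm_eq_circleMap]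
  by_cases h : (r, θ) ∈ Ioo 0 R ×ˢ Ioo (-π) π
  · rw [indicator_of_mem h, indicator_of_mem (hmem.2 h)]
  · rw [indicator_of_notMem h, indicator_of_notMem (mt hmem.1 h), smul_zero]

theorem integrableOn_polar_of_integrableOn_ball (hc : ContinuousOn g (ball 0 R))
    (hi : IntegrableOn g (ball 0 R)) :
    IntegrableOn (fun p : ℝ × ℝ => p.1 • g (circleMap 0 p.1 p.2)) (Ioo 0 R ×ˢ Ioo (-π) π) := by
  set T : Set (ℝ × ℝ) := Ioo 0 R ×ˢ Ioo (-π) π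
  set F : ℝ × ℝ → E := fun p => p.1 • g (circleMap 0 p.1 p.2)
  have hT : MeasurableSet T := measurableSet_Ioo.prod measurableSet_Ioo
  refine ⟨ContinuousOn.aestronglyMeasurable ?_ hT, ?_⟩
  · refine continuousOn_fst.smul (hc.comp (by fun_prop) ?_)
    rintro ⟨r, θ⟩ ⟨hr, -⟩
    simp [abs_of_pos hr.1, hr.2]
  change ∫⁻ p in T, ‖F p‖ₑ < ⊤
  calc ∫⁻ p in T, ‖F p‖ₑ = ∫⁻ p in polarCoord.target, ‖T.indicator F p‖ₑ := by
        simp_rw [enorm_indicator_eq_indicator_enorm]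
        rw [setLIntegral_indicator hT, inter_eq_left.2 Ioo_prod_Ioo_subset_polarCoord_target]
    _ = ∫⁻ p in polarCoord.target,
          ENNReal.ofReal p.1 • ‖(ball 0 R).indicator g (Complex.polarCoord.symm p)‖ₑ := by
        refine setLIntegral_congr_fun polarCoord.open_target.measurableSet fun p hp => ?_
        rw [← smul_indicator_ball_polarCoord_symm hp, enorm_smul, Real.enorm_of_nonneg hp.1.le,
          smul_eq_mul]
    _ = ∫⁻ w, ‖(ball 0 R).indicator g w‖ₑ :=
        Complex.lintegral_comp_polarCoord_symm (fun w => ‖(ball 0 R).indicator g w‖ₑ)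
    _ < ⊤ := (hi.integrable_indicator measurableSet_ball).hasFiniteIntegral

theorem integral_ball_eq_integral_polar (hc : ContinuousOn g (ball 0 R))
    (hi : IntegrableOn g (ball 0 R)) :
    ∫ w in ball (0 : ℂ) R, g w = ∫ r in Ioo 0 R, ∫ θ in Ioo (-π) π, r • g (circleMap 0 r θ) := by
  have hT : MeasurableSet (Ioo 0 R ×ˢ Ioo (-π) π) := measurableSet_Ioo.prod measurableSet_Ioo
  calc ∫ w in ball (0 : ℂ) R, g w = ∫ w, (ball 0 R).indicator g w :=
        (integral_indicator measurableSet_ball).symm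
    _ = ∫ p in polarCoord.target, p.1 • (ball 0 R).indicator g (Complex.polarCoord.symm p) :=
        (Complex.integral_comp_polarCoord_symm _).symm
    _ = ∫ p in polarCoord.target,
          (Ioo 0 R ×ˢ Ioo (-π) π).indicator (fun q => q.1 • g (circleMap 0 q.1 q.2)) p :=
        setIntegral_congr_fun polarCoord.open_target.measurableSet
          fun _ => smul_indicator_ball_polarCoord_symm
    _ = ∫ p in Ioo 0 R ×ˢ Ioo (-π) π, p.1 • g (circleMap 0 p.1 p.2) := by
        rw [setIntegral_indicator hT, inter_eq_right.2 Ioo_prod_Ioo_subset_polarCoord_target]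
    _ = _ := by
        rw [Measure.volume_eq_prod,
          setIntegral_prod _ (integrableOn_polar_of_integrableOn_ball hc hi)]

end Polar

theorem conj_circleMap_zero_eq_sq_div (θ : ℝ) {r : ℝ} (hr : r ≠ 0) :
    conj (circleMap 0 r θ) = r ^ 2 / circleMap 0 r θ := by
  rw [eq_div_iff (circleMap_ne_center hr), mul_comm, mul_conj', norm_circleMap_zero,
    ← ofReal_pow, sq_abs, ofReal_pow]

theorem integral_Ioo_mul_conj_pow_circleMap {f : ℂ → ℂ} {r : ℝ} (hr : 0 < r)
    (hf : DifferentiableOn ℂ f (closedBall 0 r)) (n : ℕ) :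
    ∫ θ in Ioo (-π) π, f (circleMap 0 r θ) * conj (circleMap 0 r θ) ^ n
      = 2 * π * r ^ (2 * n) * (iteratedDeriv n f 0 / n !) := by
  set G : ℝ → ℂ := fun θ => f (circleMap 0 r θ) * conj (circleMap 0 r θ) ^ n
  have hG : Function.Periodic G (2 * π) := fun θ => by simp only [G, periodic_circleMap 0 r θ]
  have hcircle : ∀ θ, deriv (circleMap 0 r) θ • ((1 / (circleMap 0 r θ - 0) ^ (n + 1)) •
      f (circleMap 0 r θ)) = I / r ^ (2 * n) * G θ := by
    intro θ
    have hz : circleMap 0 r θ ≠ 0 := circleMap_ne_center hr.ne'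
    have hr' : (r : ℂ) ≠ 0 := ofReal_ne_zero.2 hr.ne'
    simp only [G, deriv_circleMap, smul_eq_mul, sub_zero, conj_circleMap_zero_eq_sq_div θ hr.ne',
      div_pow, mul_div_assoc']
    field_simp
    ring
  have hcauchy := hf.circleIntegral_one_div_sub_center_pow_smul hr n
  rw [circleIntegral, intervalIntegral.integral_congr (fun θ _ => hcircle θ),
    intervalIntegral.integral_const_mul] at hcauchy
  calc ∫ θ in Ioo (-π) π, G θ = ∫ θ in (-π)..(-π + 2 * π), G θ := by
        rw [show -π + 2 * π = π by ring,
          intervalIntegral.integral_of_le (by linarith [Real.pi_pos]), integral_Ioc_eq_integral_Ioo]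
    _ = ∫ θ in (0 : ℝ)..(0 + 2 * π), G θ := hG.intervalIntegral_add_eq _ _
    _ = _ := by
        rw [zero_add]
        have hr' : (r : ℂ) ^ (2 * n) ≠ 0 := pow_ne_zero _ (ofReal_ne_zero.2 hr.ne')
        rw [smul_eq_mul, div_mul_eq_mul_div, div_eq_iff hr'] at hcauchy
        refine mul_left_cancel₀ I_ne_zero ?_
        rw [hcauchy]
        ring

theorem integral_ball_mul_conj_pow {f : ℂ → ℂ} {R : ℝ} (hR : 0 ≤ R)
    (hf : DifferentiableOn ℂ f (ball 0 R)) (hi : IntegrableOn f (ball 0 R)) (n : ℕ) :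
    ∫ w in ball (0 : ℂ) R, f w * conj w ^ n
      = π * R ^ (2 * n + 2) / (n + 1) * (iteratedDeriv n f 0 / n !) := by
  have hi' : IntegrableOn (fun w => f w * conj w ^ n) (ball 0 R) := by
    refine hi.mul_bdd (c := R ^ n) (by fun_prop) ?_
    filter_upwards [ae_restrict_mem measurableSet_ball] with w hw
    rw [mem_ball_zero_iff] at hw
    simpa using pow_le_pow_left₀ (norm_nonneg w) hw.le n
  have hcircle : ∀ r ∈ Ioo 0 R,
      ∫ θ in Ioo (-π) π, r • (f (circleMap 0 r θ) * conj (circleMap 0 r θ) ^ n)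
        = (2 * π * (iteratedDeriv n f 0 / n !)) * ((r ^ (2 * n + 1) : ℝ) : ℂ) := by
    intro r hr
    rw [integral_smul, integral_Ioo_mul_conj_pow_circleMap hr.1
      (hf.mono (closedBall_subset_ball hr.2)), real_smul]
    push_cast
    ring
  rw [integral_ball_eq_integral_polar (g := fun w => f w * conj w ^ n)
      (hf.continuousOn.mul (by fun_prop)) hi',
    setIntegral_congr_fun measurableSet_Ioo hcircle, integral_const_mul,
    ← integral_Ioc_eq_integral_Ioo, ← intervalIntegral.integral_of_le hR,
    intervalIntegral.integral_ofReal, integral_pow]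
  push_cast
  rw [zero_pow (by omega), sub_zero, show (2 : ℂ) * n + 1 + 1 = 2 * (n + 1) by ring]
  field_simp

/-- Injectivity of the Schiffer operator `T(𝔻,𝔻*)` (instance of Corollary 4.10 for the unit
circle): if `f` is in the Bergman space of `𝔻` and `∫_𝔻 conj(f(w))/(w−z)² dA(w) = 0` for all
`|z| > 1`, then `f = 0` on `𝔻`. -/
theorem stmt_14 (f : ℂ → ℂ) (hf : DifferentiableOn ℂ f (ball (0:ℂ) 1))
    (hf2 : IntegrableOn (fun w => ‖f w‖ ^ 2) (ball (0:ℂ) 1) volume)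
    (hT : ∀ z : ℂ, 1 < ‖z‖ →
      (∫ w in ball (0:ℂ) 1, (starRingEnd ℂ) (f w) / (w - z) ^ 2) = 0) :
    ∀ z ∈ ball (0:ℂ) 1, f z = 0 := by
  have hi : IntegrableOn f (ball 0 1) := by
    have : IsFiniteMeasure (volume.restrict (ball (0 : ℂ) 1)) :=
      isFiniteMeasure_restrict.2 measure_ball_lt_top.ne
    exact ((memLp_two_iff_integrable_sq_norm
      (hf.continuousOn.aestronglyMeasurable measurableSet_ball)).2 hf2).integrable one_le_two
  have hderiv : ∀ n, iteratedDeriv n f 0 = 0 := by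
    intro n
    have hmoment := integral_mul_pow_eq_zero_of_integral_div_sub_sq_eq_zero
      (g := fun w => conj (f w)) (ae_restrict_mem measurableSet_ball)
      (conjCLE.toContinuousLinearMap.integrable_comp hi) hT n
    have h := integral_ball_mul_conj_pow zero_le_one hf hi n
    have hconj : ∫ w in ball (0 : ℂ) 1, f w * conj w ^ n
        = conj (∫ w in ball (0 : ℂ) 1, conj (f w) * w ^ n) := by
      rw [← integral_conj]
      simp
    rw [hconj, hmoment, map_zero, eq_comm] at h
    simpa [Real.pi_ne_zero, n.factorial_ne_zero, Nat.cast_add_one_ne_zero] using h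
  intro z hz
  have hsum := hasSum_taylorSeries_on_ball hf hz
  simp only [hderiv, smul_zero] at hsum
  exact hsum.unique hasSum_zero
end
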